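/- In the rank-10 lattice Pic'' (Example 1), the orthogonal complement of the span of the eight classes E1−E2, E2−E3, E3−E4, E5−E6, E6−E7, E7−E8, H0−E1−E2, H1−E5−E6 with respect to the intersection form equals ℤβ1 + ℤβ2, where β1 = 2H1−E1−E2−E3−E4 and β2 = 2H0−E5−E6−E7−E8; moreover β1·β1 = β2·β2 = −4 and β1·β2 = 4, so the corresponding generalized Cartan matrix 2(βi·βj)/(βi·βi) equals [[2,−2],[−2,2]], which is the affine Cartan matrix of type A1^(1). -/

import Mathlib

/-- The Picard lattice of Example 1: the free ℤ-module of rank 10 with basis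
`H0, H1, E1, …, E8`. -/
abbrev Pic'' : Type := Fin 10 → ℤ

/-- The class `H0`. -/
def H0 : Pic'' := Pi.single 0 1

/-- The class `H1`. -/
def H1 : Pic'' := Pi.single 1 1

/-- The exceptional classes: `E k` is the paper's `E_{k+1}` for `k : Fin 8`. -/
def E (k : Fin 8) : Pic'' := Pi.single k.succ.succ 1

/-- The intersection form: `H0·H1 = 1`, `H0·H0 = H1·H1 = 0`, `Ek·El = -δ`, `Hi·Ek = 0`. -/
def ip (u v : Pic'') : ℤ :=
  u 0 * v 1 + u 1 * v 0 - ∑ k : Fin 8, u k.succ.succ * v k.succ.succ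

/-- The eight classes of the irreducible components of the anti-canonical divisor of
the space of initial values of the discrete Painlevé equation `w1∘w2` of Example 1
(Dynkin type `D7^(1)`). -/
def d : Fin 8 → Pic'' :=
  ![E 0 - E 1, E 1 - E 2, E 2 - E 3, E 4 - E 5, E 5 - E 6, E 6 - E 7,
    H0 - E 0 - E 1, H1 - E 4 - E 5]

/-- `β1 = 2H1 - E1 - E2 - E3 - E4`. -/
def β1 : Pic'' := (2 : ℤ) • H1 - E 0 - E 1 - E 2 - E 3

/-- `β2 = 2H0 - E5 - E6 - E7 - E8`. -/
def β2 : Pic'' := (2 : ℤ) • H0 - E 4 - E 5 - E 6 - E 7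

lemma ip_eval (u v : Pic'') : ip u v = u 0 * v 1 + u 1 * v 0 -
    (u 2 * v 2 + u 3 * v 3 + u 4 * v 4 + u 5 * v 5 + u 6 * v 6 + u 7 * v 7
      + u 8 * v 8 + u 9 * v 9) := by
  show u 0 * v 1 + u 1 * v 0 - ∑ k : Fin 8, u k.succ.succ * v k.succ.succ = _
  rw [Fin.sum_univ_eight]; rfl

lemma ip_left_comb (a b : ℤ) (x y w : Pic'') :
    ip (a • x + b • y) w = a * ip x w + b * ip y w := by
  simp only [ip_eval, Pi.add_apply, Pi.smul_apply, smul_eq_mul]; ring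

/-- In Example 1, the orthogonal complement of the span of the eight components is
`ℤβ1 + ℤβ2`, with `β1·β1 = β2·β2 = -4` and `β1·β2 = 4`, so the generalized Cartan
matrix `2(βi·βj)/(βi·βi)` is `[[2,-2],[-2,2]]`, the affine Cartan matrix of type
`A1^(1)` (positive semidefinite but not positive definite). -/
theorem example1_orthogonal_complement_and_cartan :
    (∀ v : Pic'', (∀ i : Fin 8, ip v (d i) = 0) ↔
        v ∈ Submodule.span ℤ ({β1, β2} : Set Pic'')) ∧
    ip β1 β1 = -4 ∧ ip β2 β2 = -4 ∧ ip β1 β2 = 4 ∧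
    (Matrix.of fun i j : Fin 2 =>
        2 * ip (![β1, β2] i) (![β1, β2] j) / ip (![β1, β2] i) (![β1, β2] i))
      = !![2, -2; -2, 2] ∧
    ((!![2, -2; -2, 2] : Matrix (Fin 2) (Fin 2) ℤ).map (Int.cast : ℤ → ℝ)).PosSemidef ∧
    ¬ ((!![2, -2; -2, 2] : Matrix (Fin 2) (Fin 2) ℤ).map (Int.cast : ℤ → ℝ)).PosDef := by
  have hmap : ((!![2, -2; -2, 2] : Matrix (Fin 2) (Fin 2) ℤ).map (Int.cast : ℤ → ℝ))
      = !![(2 : ℝ), -2; -2, 2] := by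
    ext i j; fin_cases i <;> fin_cases j <;> simp [Matrix.map]
  refine ⟨?_, by decide, by decide, by decide, by decide, ?_, ?_⟩
  · intro v
    constructor
    · intro h
      rw [Submodule.mem_span_pair]
      refine ⟨-(v 2), -(v 6), ?_⟩
      have h0 := h 0
      rw [ip_eval] at h0
      simp only [show d 0 0 = 0 from by decide, show d 0 1 = 0 from by decide, show d 0 2 = 1 from by decide, show d 0 3 = (-1) from by decide, show d 0 4 = 0 from by decide, show d 0 5 = 0 from by decide, show d 0 6 = 0 from by decide, show d 0 7 = 0 from by decide, show d 0 8 = 0 from by decide, show d 0 9 = 0 from by decide] at h0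
      have h1 := h 1
      rw [ip_eval] at h1
      simp only [show d 1 0 = 0 from by decide, show d 1 1 = 0 from by decide, show d 1 2 = 0 from by decide, show d 1 3 = 1 from by decide, show d 1 4 = (-1) from by decide, show d 1 5 = 0 from by decide, show d 1 6 = 0 from by decide, show d 1 7 = 0 from by decide, show d 1 8 = 0 from by decide, show d 1 9 = 0 from by decide] at h1
      have h2 := h 2
      rw [ip_eval] at h2
      simp only [show d 2 0 = 0 from by decide, show d 2 1 = 0 from by decide, show d 2 2 = 0 from by decide, show d 2 3 = 0 from by decide, show d 2 4 = 1 from by decide, show d 2 5 = (-1) from by decide, show d 2 6 = 0 from by decide, show d 2 7 = 0 from by decide, show d 2 8 = 0 from by decide, show d 2 9 = 0 from by decide] at h2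
      have h3 := h 3
      rw [ip_eval] at h3
      simp only [show d 3 0 = 0 from by decide, show d 3 1 = 0 from by decide, show d 3 2 = 0 from by decide, show d 3 3 = 0 from by decide, show d 3 4 = 0 from by decide, show d 3 5 = 0 from by decide, show d 3 6 = 1 from by decide, show d 3 7 = (-1) from by decide, show d 3 8 = 0 from by decide, show d 3 9 = 0 from by decide] at h3
      have h4 := h 4
      rw [ip_eval] at h4
      simp only [show d 4 0 = 0 from by decide, show d 4 1 = 0 from by decide, show d 4 2 = 0 from by decide, show d 4 3 = 0 from by decide, show d 4 4 = 0 from by decide, show d 4 5 = 0 from by decide, show d 4 6 = 0 from by decide, show d 4 7 = 1 from by decide, show d 4 8 = (-1) from by decide, show d 4 9 = 0 from by decide] at h4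
      have h5 := h 5
      rw [ip_eval] at h5
      simp only [show d 5 0 = 0 from by decide, show d 5 1 = 0 from by decide, show d 5 2 = 0 from by decide, show d 5 3 = 0 from by decide, show d 5 4 = 0 from by decide, show d 5 5 = 0 from by decide, show d 5 6 = 0 from by decide, show d 5 7 = 0 from by decide, show d 5 8 = 1 from by decide, show d 5 9 = (-1) from by decide] at h5
      have h6 := h 6
      rw [ip_eval] at h6
      simp only [show d 6 0 = 1 from by decide, show d 6 1 = 0 from by decide, show d 6 2 = (-1) from by decide, show d 6 3 = (-1) from by decide, show d 6 4 = 0 from by decide, show d 6 5 = 0 from by decide, show d 6 6 = 0 from by decide, show d 6 7 = 0 from by decide, show d 6 8 = 0 from by decide, show d 6 9 = 0 from by decide] at h6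
      have h7 := h 7
      rw [ip_eval] at h7
      simp only [show d 7 0 = 0 from by decide, show d 7 1 = 1 from by decide, show d 7 2 = 0 from by decide, show d 7 3 = 0 from by decide, show d 7 4 = 0 from by decide, show d 7 5 = 0 from by decide, show d 7 6 = (-1) from by decide, show d 7 7 = (-1) from by decide, show d 7 8 = 0 from by decide, show d 7 9 = 0 from by decide] at h7

      funext j
      fin_cases j <;>
        simp (config := { decide := true })
          [β1, β2, E, H0, H1, Pi.single, Function.update] <;>
        linarith
    · intro hv
      rw [Submodule.mem_span_pair] at hv
      obtain ⟨a, b, rfl⟩ := hv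
      intro i
      rw [ip_left_comb]
      have hb1 : ip β1 (d i) = 0 := by fin_cases i <;> decide
      have hb2 : ip β2 (d i) = 0 := by fin_cases i <;> decide
      rw [hb1, hb2]; ring
  · rw [hmap, Matrix.posSemidef_iff_dotProduct_mulVec]
    refine ⟨?_, ?_⟩
    · ext i j
      fin_cases i <;> fin_cases j <;>
        simp [Matrix.conjTranspose_apply]
    · intro x
      have hq : dotProduct (star x) ((!![(2:ℝ), -2; -2, 2]).mulVec x)
          = 2 * (x 0 - x 1) ^ 2 := by
        simp [Matrix.mulVec, dotProduct, Fin.sum_univ_two]; ring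
      rw [hq]; positivity
  · rw [hmap, Matrix.posDef_iff_dotProduct_mulVec]
    intro hpd
    have h := hpd.2 (x := ![1, 1]) (by
      intro h0
      have := congrFun h0 0
      simp at this)
    simp [Matrix.mulVec, dotProduct, Fin.sum_univ_two] at h
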